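/- Fix real numbers δ₁ > 0 and δ₂ > 0 with δ₁ + δ₂ < 1 and set ξ = 1 − δ₁ − δ₂. Fix r₀ > 0 and set r = (1/ξ)·√(r₀/(2·log₂ e)); assume r ≤ 1 and let N = ⌊1/r⌋. Let Γ*_{r,2} = { (δ₁ + ξ·a/N, 1 − δ₁ − ξ·a/N) : a = 0, 1, …, N }. Then Γ*_{r,2} is a set of probability vectors on Fin 2 contained in { (q, 1−q) : δ₁ ≤ q ≤ 1 − δ₂ }, its cardinality is exactly N + 1 = ⌊1/r⌋ + 1, and any two distinct elements P, Q ∈ Γ*_{r,2} satisfy D(P‖Q) ≥ r₀. -/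

import Mathlib

/-!
With `p_a = δ₁ + ξ a / N`, the grid consists of the vectors `(p_a, 1 - p_a)`, and distinct grid
points satisfy `|p_a - p_b| ≥ ξ / N ≥ ξ r` because `N ≤ 1 / r`. The binary Pinsker inequality
`D(P‖Q) ≥ 2 (p - q)² / ln 2` (in bits) then gives `D(P‖Q) ≥ 2 (ξ r)² / ln 2 = r₀`, which is how `r`
was chosen. Pinsker holds because `x ↦ D(p‖x) - 2 (p - x)²` vanishes at `p` and has derivative
`(x - p) (1 / (x (1 - x)) - 4)`, of the sign of `x - p` since `x (1 - x) ≤ 1 / 4`; by the symmetry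
`(p, q) ↦ (1 - p, 1 - q)` it suffices to treat `p ≤ q`.
-/

open scoped Classical

/-- Kullback–Leibler divergence in bits between two probability vectors on `Fin k`,
with the conventions that a term with `P i = 0` contributes `0`, and the divergence
is `+∞` if `P i > 0` while `Q i = 0` for some `i`. -/
noncomputable def klBits {k : ℕ} (P Q : Fin k → ℝ) : EReal :=
  if ∃ i, 0 < P i ∧ Q i = 0 then ⊤
  else ((∑ i, if P i = 0 then 0 else P i * Real.logb 2 (P i / Q i) : ℝ) : EReal)

open Real Set

noncomputable def binaryKL (p q : ℝ) : ℝ :=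
  p * log (p / q) + (1 - p) * log ((1 - p) / (1 - q))

lemma binaryKL_one_sub (p q : ℝ) : binaryKL (1 - p) (1 - q) = binaryKL p q := by
  simp only [binaryKL, sub_sub_cancel]
  ring

lemma binaryKL_self (p : ℝ) : binaryKL p p = 0 := by
  simp [binaryKL]

lemma hasDerivAt_binaryKL {p x : ℝ} (hp0 : 0 < p) (hp1 : p < 1) (hx0 : 0 < x) (hx1 : x < 1) :
    HasDerivAt (binaryKL p) ((x - p) / (x * (1 - x))) x := by
  have hlog : binaryKL p =ᶠ[nhds x]
      fun y => p * (log p - log y) + (1 - p) * (log (1 - p) - log (1 - y)) := by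
    filter_upwards [Ioo_mem_nhds hx0 hx1] with y hy
    rw [binaryKL, log_div hp0.ne' hy.1.ne', log_div (by linarith) (by linarith [hy.2])]
  have hsub : HasDerivAt (fun y : ℝ => 1 - y) (-1) x := (hasDerivAt_id x).const_sub 1
  have h := (((hasDerivAt_log hx0.ne').const_sub (log p)).const_mul p).add
    ((((hasDerivAt_log (by linarith : (1 - x) ≠ 0)).comp x hsub).const_sub
      (log (1 - p))).const_mul (1 - p))
  refine (h.congr_deriv ?_).congr_of_eventuallyEq hlog
  have : 1 - x ≠ 0 := by linarith
  field_simp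
  ring

lemma two_mul_sq_sub_le_binaryKL_of_le {p q : ℝ} (hp0 : 0 < p) (hpq : p ≤ q) (hq1 : q < 1) :
    2 * (p - q) ^ 2 ≤ binaryKL p q := by
  have hsub : Icc p q ⊆ Ioo 0 1 := Icc_subset_Ioo hp0 hq1
  have hderiv : ∀ x ∈ Icc p q, HasDerivAt (fun y => binaryKL p y - 2 * (p - y) ^ 2)
      ((x - p) / (x * (1 - x)) - 4 * (x - p)) x := fun x hx =>
    ((hasDerivAt_binaryKL hp0 (hpq.trans_lt hq1) (hsub hx).1 (hsub hx).2).sub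
      ((((hasDerivAt_id x).const_sub p).pow 2).const_mul 2)).congr_deriv (by simp only [Nat.cast_ofNat, id_eq]; ring)
  have hmono : MonotoneOn (fun y => binaryKL p y - 2 * (p - y) ^ 2) (Icc p q) := by
    refine monotoneOn_of_hasDerivWithinAt_nonneg
      (f' := fun x => (x - p) / (x * (1 - x)) - 4 * (x - p)) (convex_Icc p q)
      (fun x hx => (hderiv x hx).continuousAt.continuousWithinAt) (fun x hx => ?_) (fun x hx => ?_)
    <;> rw [interior_Icc] at hx
    · exact (hderiv x (Ioo_subset_Icc_self hx)).hasDerivWithinAt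
    · obtain ⟨hx0, hx1⟩ := hsub (Ioo_subset_Icc_self hx)
      have hvar : 4 * (x * (1 - x)) ≤ 1 := by nlinarith [sq_nonneg (2 * x - 1)]
      rw [sub_nonneg, le_div_iff₀ (mul_pos hx0 (sub_pos.2 hx1))]
      nlinarith [mul_le_mul_of_nonneg_left hvar (sub_nonneg.2 hx.1.le)]
  simpa [binaryKL_self] using hmono (left_mem_Icc.2 hpq) (right_mem_Icc.2 hpq) hpq

theorem two_mul_sq_sub_le_binaryKL {p q : ℝ} (hp0 : 0 < p) (hp1 : p < 1) (hq0 : 0 < q)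
    (hq1 : q < 1) : 2 * (p - q) ^ 2 ≤ binaryKL p q := by
  rcases le_total p q with hpq | hqp
  · exact two_mul_sq_sub_le_binaryKL_of_le hp0 hpq hq1
  · rw [← binaryKL_one_sub]
    convert two_mul_sq_sub_le_binaryKL_of_le (sub_pos.2 hp1) (sub_le_sub_left hqp 1)
      (sub_lt_self 1 hq0) using 2
    ring

lemma klBits_of_pos {k : ℕ} {P Q : Fin k → ℝ} (hP : ∀ i, 0 < P i) (hQ : ∀ i, 0 < Q i) :
    klBits P Q = ((∑ i, P i * logb 2 (P i / Q i) : ℝ) : EReal) := by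
  rw [klBits, if_neg fun ⟨i, _, hi⟩ => (hQ i).ne' hi]
  exact congrArg _ (Finset.sum_congr rfl fun i _ => if_neg (hP i).ne')

lemma klBits_binary {p q : ℝ} (hp0 : 0 < p) (hp1 : p < 1) (hq0 : 0 < q) (hq1 : q < 1) :
    klBits ![p, 1 - p] ![q, 1 - q] = ((binaryKL p q / log 2 : ℝ) : EReal) := by
  rw [klBits_of_pos (Fin.forall_fin_two.2 ⟨hp0, sub_pos.2 hp1⟩)
    (Fin.forall_fin_two.2 ⟨hq0, sub_pos.2 hq1⟩)]
  simp [binaryKL, logb, add_div, mul_div_assoc]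

theorem two_mul_sq_sub_div_log_two_le_klBits {p q : ℝ} (hp0 : 0 < p) (hp1 : p < 1)
    (hq0 : 0 < q) (hq1 : q < 1) :
    ((2 * (p - q) ^ 2 / log 2 : ℝ) : EReal) ≤ klBits ![p, 1 - p] ![q, 1 - q] := by
  rw [klBits_binary hp0 hp1 hq0 hq1, EReal.coe_le_coe_iff]
  exact div_le_div_of_nonneg_right (two_mul_sq_sub_le_binaryKL hp0 hp1 hq0 hq1)
    (log_pos one_lt_two).le

lemma add_mul_div_mem_Icc (δ : ℝ) {ξ : ℝ} {a N : ℕ} (hξ : 0 ≤ ξ) (ha : a ≤ N) :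
    δ + ξ * a / N ∈ Icc δ (δ + ξ) := by
  have hfrac : (a : ℝ) / N ≤ 1 := div_le_one_of_le₀ (by exact_mod_cast ha) N.cast_nonneg
  rw [mul_div_assoc]
  exact ⟨le_add_of_nonneg_right (by positivity),
    add_le_add_right (mul_le_of_le_one_right hξ hfrac) δ⟩

lemma sq_div_le_sq_sub_add_mul_div (δ : ℝ) {ξ : ℝ} {a b N : ℕ} (hab : a ≠ b) :
    (ξ / N) ^ 2 ≤ (δ + ξ * a / N - (δ + ξ * b / N)) ^ 2 := by
  have hgap : 1 ≤ ((a : ℝ) - b) ^ 2 := by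
    rw [one_le_sq_iff_one_le_abs]
    exact_mod_cast Int.one_le_abs (sub_ne_zero.2 (Nat.cast_injective.ne hab : (a : ℤ) ≠ b))
  calc (ξ / N) ^ 2 ≤ (ξ / N) ^ 2 * ((a : ℝ) - b) ^ 2 := le_mul_of_one_le_right (sq_nonneg _) hgap
    _ = _ := by ring

lemma le_one_div_floor_one_div {r : ℝ} (hr0 : 0 < r) (hr1 : r ≤ 1) : r ≤ 1 / ⌊1 / r⌋₊ := by
  have hfloor : 0 < ⌊1 / r⌋₊ := Nat.floor_pos.2 (by rwa [le_div_iff₀ hr0, one_mul])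
  rw [le_div_iff₀ (by positivity), mul_comm, ← le_div_iff₀ hr0]
  exact Nat.floor_le (by positivity)

lemma mul_log_two_div_two_le_sq_div_floor {ξ r₀ r : ℝ} (hξ : 0 < ξ) (hr₀ : 0 < r₀)
    (hr : r = 1 / ξ * √(r₀ / (2 * logb 2 (exp 1)))) (hr1 : r ≤ 1) :
    r₀ * log 2 / 2 ≤ (ξ / ⌊1 / r⌋₊) ^ 2 := by
  have hlog2 : 0 < log 2 := log_pos one_lt_two
  have hscale : ξ * r = √(r₀ * log 2 / 2) := by
    rw [hr, one_div, mul_inv_cancel_left₀ hξ.ne', logb, log_exp]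
    field_simp
  have hr0 : 0 < r := pos_of_mul_pos_right (hscale ▸ by positivity) hξ.le
  rw [← sq_sqrt (by positivity : 0 ≤ r₀ * log 2 / 2), ← hscale, div_eq_mul_one_div]
  gcongr
  exact le_one_div_floor_one_div hr0 hr1

/-- The binary grid `Γ*_{r,2} = {(δ₁ + ξ·a/N, 1 − δ₁ − ξ·a/N) : a = 0,…,N}`
with `ξ = 1 − δ₁ − δ₂`, `r = (1/ξ)·√(r₀/(2·log₂ e))` and `N = ⌊1/r⌋` consists of
probability vectors on `Fin 2` contained in `{(q, 1−q) : δ₁ ≤ q ≤ 1 − δ₂}`, has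
cardinality exactly `N + 1`, and any two distinct elements satisfy `D(P‖Q) ≥ r₀`. -/
theorem binary_grid_packing (δ₁ δ₂ : ℝ) (h1 : 0 < δ₁) (h2 : 0 < δ₂) (h12 : δ₁ + δ₂ < 1)
    (ξ : ℝ) (hξ : ξ = 1 - δ₁ - δ₂)
    (r₀ : ℝ) (hr₀ : 0 < r₀)
    (r : ℝ) (hr : r = (1 / ξ) * Real.sqrt (r₀ / (2 * Real.logb 2 (Real.exp 1))))
    (hr1 : r ≤ 1)
    (N : ℕ) (hN : N = ⌊1 / r⌋₊)
    (Γ : Set (Fin 2 → ℝ))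
    (hΓ : Γ = {P | ∃ a : ℕ, a ≤ N ∧
        P = ![δ₁ + ξ * (a : ℝ) / N, 1 - δ₁ - ξ * (a : ℝ) / N]}) :
    (∀ P ∈ Γ, (∀ i, 0 ≤ P i) ∧ (∑ i, P i = 1) ∧
        δ₁ ≤ P 0 ∧ P 0 ≤ 1 - δ₂ ∧ P 1 = 1 - P 0) ∧
    Γ.ncard = N + 1 ∧
    (∀ P ∈ Γ, ∀ Q ∈ Γ, P ≠ Q → (r₀ : EReal) ≤ klBits P Q) := by
  have hξ0 : 0 < ξ := by linarith
  have hsep : r₀ * log 2 / 2 ≤ (ξ / N) ^ 2 :=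
    hN ▸ mul_log_two_div_two_le_sq_div_floor hξ0 hr₀ hr hr1
  have hsep0 : 0 < r₀ * log 2 / 2 := by have := log_pos one_lt_two; positivity
  have hmem : ∀ a ≤ N, δ₁ + ξ * a / N ∈ Icc δ₁ (1 - δ₂) := fun a ha => by
    rw [show 1 - δ₂ = δ₁ + ξ by linarith]
    exact add_mul_div_mem_Icc δ₁ hξ0.le ha
  have hunit : ∀ a ≤ N, δ₁ + ξ * a / N ∈ Ioo 0 1 := fun a ha =>
    Icc_subset_Ioo h1 (by linarith) (hmem a ha)
  obtain rfl : Γ = (fun a : ℕ => ![δ₁ + ξ * a / N, 1 - (δ₁ + ξ * a / N)]) '' Iic N := by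
    simp_rw [hΓ, sub_sub]
    ext
    simp [eq_comm]
  refine ⟨?_, ?_, ?_⟩
  · rintro _ ⟨a, ha, rfl⟩
    obtain ⟨hlo, hhi⟩ := hmem a ha
    obtain ⟨hpos, hlt⟩ := hunit a ha
    simp only [Fin.forall_fin_two, Fin.sum_univ_two, Matrix.cons_val_zero, Matrix.cons_val_one]
    exact ⟨⟨hpos.le, sub_nonneg.2 hlt.le⟩, add_sub_cancel _ _, hlo, hhi, trivial⟩
  · refine (InjOn.ncard_image fun a _ b _ hab => ?_).trans (ncard_Iic_nat N)
    by_contra hne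
    have hgap := sq_div_le_sq_sub_add_mul_div δ₁ (ξ := ξ) (N := N) hne
    rw [show δ₁ + ξ * a / N = δ₁ + ξ * b / N from congrFun hab 0, sub_self] at hgap
    linarith
  · rintro _ ⟨a, ha, rfl⟩ _ ⟨b, hb, rfl⟩ hPQ
    have hab : a ≠ b := by rintro rfl; exact hPQ rfl
    refine le_trans ?_ (two_mul_sq_sub_div_log_two_le_klBits (hunit a ha).1 (hunit a ha).2
      (hunit b hb).1 (hunit b hb).2)
    rw [EReal.coe_le_coe_iff, le_div_iff₀ (log_pos one_lt_two)]
    linarith [sq_div_le_sq_sub_add_mul_div δ₁ (ξ := ξ) (N := N) hab]
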